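/- arXiv:1712.00369 — 8 statements merged into one kernel-verified Lean document; each statement's English description precedes it below -/
import Mathlib

section
/- Let A ∈ ℝ^{n×n}, t ≥ 0, ε ≥ 0, and let X₀ = Z(c; g^(1),…,g^(p)) be a zonotope in ℝ^n. Suppose that for each w ∈ {c, g^(1), …, g^(p)} there are matrices V_w ∈ ℝ^{n×ξ} and H_w ∈ ℝ^{ξ×ξ} such that ‖exp(A t) w − ‖w‖ · V_w exp(H_w t) e₁‖ ≤ ‖w‖ ε t. Set ĉ = ‖c‖ V_c exp(H_c t) e₁, ĝ^(i) = ‖g^(i)‖ V_{g^(i)} exp(H_{g^(i)} t) e₁, and r = (‖c‖ + Σ_{i=1}^p ‖g^(i)‖) ε t. Then { exp(A t) x : x ∈ X₀ } ⊆ Z(ĉ; ĝ^(1),…,ĝ^(p)) + { y ∈ ℝ^n : |y_j| ≤ r for every component j }. -/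
/-! The image of a zonotope under a linear map is the zonotope of the images, and replacing
the centre and generators by approximations moves each point by at most the sum of the
approximation errors, since all coefficients lie in `[-1, 1]`. The Euclidean error ball is
then contained in the box of the same radius. -/

open Matrix Set Pointwise

/-- Matrix exponential of a real square matrix. -/
noncomputable def mexp {m : ℕ} (A : Matrix (Fin m) (Fin m) ℝ) : Matrix (Fin m) (Fin m) ℝ :=
  NormedSpace.exp A

/-- Euclidean norm of a vector in `ℝ^m`. -/
noncomputable def enorm {m : ℕ} (x : Fin m → ℝ) : ℝ :=
  ‖(WithLp.toLp 2 x : EuclideanSpace ℝ (Fin m))‖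

/-- First standard basis vector of `ℝ^ξ`. -/
noncomputable def e1 {ξ : ℕ} [NeZero ξ] : Fin ξ → ℝ := Pi.single 0 1

/-- The zonotope with center `c` and generators `g i`. -/
def zonotope {n : ℕ} {ι : Type*} [Fintype ι] (c : Fin n → ℝ) (g : ι → Fin n → ℝ) :
    Set (Fin n → ℝ) :=
  {x | ∃ β : ι → ℝ, (∀ i, β i ∈ Set.Icc (-1 : ℝ) 1) ∧ x = c + ∑ i, β i • g i}

section Perturbation

variable {E ι : Type*} [SeminormedAddCommGroup E] [NormedSpace ℝ E] [Fintype ι]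

lemma norm_add_sum_smul_sub_add_sum_smul_le (c c' : E) (g g' : ι → E) {β : ι → ℝ}
    (hβ : ∀ i, |β i| ≤ 1) :
    ‖(c + ∑ i, β i • g i) - (c' + ∑ i, β i • g' i)‖ ≤ ‖c - c'‖ + ∑ i, ‖g i - g' i‖ := by
  have hsplit : (c + ∑ i, β i • g i) - (c' + ∑ i, β i • g' i)
      = (c - c') + ∑ i, β i • (g i - g' i) := by
    simp only [smul_sub, Finset.sum_sub_distrib]
    abel
  calc ‖(c + ∑ i, β i • g i) - (c' + ∑ i, β i • g' i)‖
      ≤ ‖c - c'‖ + ∑ i, ‖β i • (g i - g' i)‖ := by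
        rw [hsplit]
        exact (norm_add_le _ _).trans (add_le_add_right (norm_sum_le _ _) _)
    _ ≤ ‖c - c'‖ + ∑ i, ‖g i - g' i‖ := by
        gcongr with i
        rw [norm_smul, Real.norm_eq_abs]
        exact mul_le_of_le_one_left (norm_nonneg _) (hβ i)

end Perturbation

lemma abs_apply_le_enorm {m : ℕ} (x : Fin m → ℝ) (j : Fin m) : |x j| ≤ _root_.enorm x := by
  simpa [_root_.enorm] using PiLp.norm_apply_le (WithLp.toLp 2 x : EuclideanSpace ℝ (Fin m)) j

lemma image_mulVec_zonotope {m n : ℕ} {ι : Type*} [Fintype ι] (M : Matrix (Fin m) (Fin n) ℝ)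
    (c : Fin n → ℝ) (g : ι → Fin n → ℝ) :
    (M *ᵥ ·) '' zonotope c g = zonotope (M *ᵥ c) (fun i => M *ᵥ g i) := by
  ext x
  simp [zonotope, mulVec_add, mulVec_sum, mulVec_smul, eq_comm]

lemma zonotope_subset_zonotope_add_enorm_le {n : ℕ} {ι : Type*} [Fintype ι]
    (c c' : Fin n → ℝ) (g g' : ι → Fin n → ℝ) :
    zonotope c g ⊆ zonotope c' g'
      + {y | _root_.enorm y ≤ _root_.enorm (c - c') + ∑ i, _root_.enorm (g i - g' i)} := by
  rintro _ ⟨β, hβ, rfl⟩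
  refine ⟨c' + ∑ i, β i • g' i, ⟨β, hβ, rfl⟩, _, ?_, add_sub_cancel _ _⟩
  simpa [_root_.enorm, WithLp.toLp_sum] using
    norm_add_sum_smul_sub_add_sum_smul_le (WithLp.toLp 2 c : EuclideanSpace ℝ (Fin n))
      (WithLp.toLp 2 c') (fun i => WithLp.toLp 2 (g i)) (fun i => WithLp.toLp 2 (g' i))
      (fun i => abs_le.mpr (hβ i))

theorem stmt1_general {n ξ p : ℕ} [NeZero ξ]
    (A : Matrix (Fin n) (Fin n) ℝ) (t ε : ℝ)
    (c : Fin n → ℝ) (g : Fin p → Fin n → ℝ)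
    (Vc : Matrix (Fin n) (Fin ξ) ℝ) (Hc : Matrix (Fin ξ) (Fin ξ) ℝ)
    (Vg : Fin p → Matrix (Fin n) (Fin ξ) ℝ) (Hg : Fin p → Matrix (Fin ξ) (Fin ξ) ℝ)
    (hc : _root_.enorm (mexp (t • A) *ᵥ c - _root_.enorm c • (Vc *ᵥ (mexp (t • Hc) *ᵥ e1)))
        ≤ _root_.enorm c * ε * t)
    (hg : ∀ i, _root_.enorm (mexp (t • A) *ᵥ g i
          - _root_.enorm (g i) • (Vg i *ᵥ (mexp (t • Hg i) *ᵥ e1)))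
        ≤ _root_.enorm (g i) * ε * t) :
    (fun x => mexp (t • A) *ᵥ x) '' zonotope c g ⊆
      zonotope (_root_.enorm c • (Vc *ᵥ (mexp (t • Hc) *ᵥ e1)))
          (fun i => _root_.enorm (g i) • (Vg i *ᵥ (mexp (t • Hg i) *ᵥ e1)))
        + {y : Fin n → ℝ | ∀ j, |y j| ≤ (_root_.enorm c + ∑ i, _root_.enorm (g i)) * ε * t} := by
  have herror : _root_.enorm (mexp (t • A) *ᵥ c - _root_.enorm c • (Vc *ᵥ (mexp (t • Hc) *ᵥ e1)))
      + ∑ i, _root_.enorm (mexp (t • A) *ᵥ g i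
          - _root_.enorm (g i) • (Vg i *ᵥ (mexp (t • Hg i) *ᵥ e1)))
      ≤ (_root_.enorm c + ∑ i, _root_.enorm (g i)) * ε * t := by
    rw [add_mul, add_mul, Finset.sum_mul, Finset.sum_mul]
    exact add_le_add hc (Finset.sum_le_sum fun i _ => hg i)
  rw [image_mulVec_zonotope]
  refine (zonotope_subset_zonotope_add_enorm_le _ _ _ _).trans (Set.add_subset_add_left ?_)
  exact fun y hy j => (abs_apply_le_enorm y j).trans (hy.trans herror)

/-- Homogeneous solution for a point in time:
the image of the zonotope `Z(c; g)` under `exp(A t)` is contained in the zonotope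
`Z(ĉ; ĝ)` plus the error box of radius `(‖c‖ + Σᵢ ‖g⁽ⁱ⁾‖) ε t`. -/
theorem stmt1 {n ξ p : ℕ} [NeZero ξ]
    (A : Matrix (Fin n) (Fin n) ℝ) (t ε : ℝ) (ht : 0 ≤ t) (hε : 0 ≤ ε)
    (c : Fin n → ℝ) (g : Fin p → Fin n → ℝ)
    (Vc : Matrix (Fin n) (Fin ξ) ℝ) (Hc : Matrix (Fin ξ) (Fin ξ) ℝ)
    (Vg : Fin p → Matrix (Fin n) (Fin ξ) ℝ) (Hg : Fin p → Matrix (Fin ξ) (Fin ξ) ℝ)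
    (hc : _root_.enorm (mexp (t • A) *ᵥ c - _root_.enorm c • (Vc *ᵥ (mexp (t • Hc) *ᵥ e1)))
        ≤ _root_.enorm c * ε * t)
    (hg : ∀ i, _root_.enorm (mexp (t • A) *ᵥ g i
          - _root_.enorm (g i) • (Vg i *ᵥ (mexp (t • Hg i) *ᵥ e1)))
        ≤ _root_.enorm (g i) * ε * t) :
    (fun x => mexp (t • A) *ᵥ x) '' zonotope c g ⊆
      zonotope (_root_.enorm c • (Vc *ᵥ (mexp (t • Hc) *ᵥ e1)))
          (fun i => _root_.enorm (g i) • (Vg i *ᵥ (mexp (t • Hg i) *ᵥ e1)))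
        + {y : Fin n → ℝ | ∀ j, |y j| ≤ (_root_.enorm c + ∑ i, _root_.enorm (g i)) * ε * t} :=
  stmt1_general A t ε c g Vc Hc Vg Hg hc hg
end

section
/- Let A ∈ ℝ^{n×n}, t ≥ 0, and let b_c, b_Δ ∈ ℝ^n with (b_Δ)_i ≥ 0 for all i. Then for every x ∈ ℝ^n with |x_i − (b_c)_i| ≤ (b_Δ)_i for all i, the vector exp(A t) x − exp(A t) b_c satisfies |(exp(A t) x − exp(A t) b_c)_i| ≤ (exp(|A| t) b_Δ)_i for all i, where |A| denotes the entrywise absolute value of A. In other words, exp(A t) maps the box [b_c − b_Δ, b_c + b_Δ] into the box [exp(A t) b_c − exp(|A| t) b_Δ, exp(A t) b_c + exp(|A| t) b_Δ]. -/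
open Matrix

/-- Entrywise absolute value of a matrix. -/
def matAbs {m : ℕ} (A : Matrix (Fin m) (Fin m) ℝ) : Matrix (Fin m) (Fin m) ℝ :=
  Matrix.of fun i j => |A i j|

/-! Entrywise domination `|M i j| ≤ M' i j` is preserved by matrix products, hence by powers,
and, since `exp M` is entrywise the sum of the exponential series, also by `exp`. As `t • |A|`
dominates `t • A` for `t ≥ 0`, `exp (t • A) *ᵥ (x - b_c)` is dominated by `exp (t • |A|) *ᵥ b_Δ`. -/

section EntrywiseDomination

variable {l m n R : Type*} [Fintype m] [Ring R] [LinearOrder R] [IsStrictOrderedRing R]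

theorem abs_dotProduct_le {v w v' w' : m → R} (hv : ∀ i, |v i| ≤ v' i)
    (hw : ∀ i, |w i| ≤ w' i) : |v ⬝ᵥ w| ≤ v' ⬝ᵥ w' :=
  (Finset.abs_sum_le_sum_abs _ _).trans <| Finset.sum_le_sum fun i _ => by
    rw [abs_mul]
    exact mul_le_mul (hv i) (hw i) (abs_nonneg _) ((abs_nonneg _).trans (hv i))

theorem abs_mul_apply_le {M M' : Matrix l m R} {N N' : Matrix m n R}
    (hM : ∀ i j, |M i j| ≤ M' i j) (hN : ∀ i j, |N i j| ≤ N' i j) (i : l) (k : n) :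
    |(M * N) i k| ≤ (M' * N') i k := by
  simpa only [mul_apply'] using abs_dotProduct_le (hM i) (fun j => hN j k)

theorem abs_mulVec_le {M M' : Matrix l m R} {v v' : m → R}
    (hM : ∀ i j, |M i j| ≤ M' i j) (hv : ∀ j, |v j| ≤ v' j) (i : l) :
    |(M *ᵥ v) i| ≤ (M' *ᵥ v') i :=
  abs_dotProduct_le (hM i) hv

theorem abs_pow_apply_le [DecidableEq m] {M M' : Matrix m m R}
    (hM : ∀ i j, |M i j| ≤ M' i j) (k : ℕ) (i j : m) : |(M ^ k) i j| ≤ (M' ^ k) i j := by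
  induction k generalizing i j with
  | zero => by_cases h : i = j <;> simp [one_apply, h]
  | succ k ih => rw [pow_succ, pow_succ]; exact abs_mul_apply_le ih hM i j

end EntrywiseDomination

section Exponential

open NormedSpace Nat

variable {m : Type*} [Fintype m] [DecidableEq m]

theorem hasSum_exp_apply (M : Matrix m m ℝ) (i j : m) :
    HasSum (fun k => (k ! : ℝ)⁻¹ * (M ^ k) i j) (exp M i j) := by
  let := Matrix.linftyOpNormedRing (n := m) (α := ℝ)
  let := Matrix.linftyOpNormedAlgebra (n := m) (R := ℝ) (α := ℝ)
  exact Pi.hasSum.mp (Pi.hasSum.mp (exp_series_hasSum_exp' (𝕂 := ℝ) M) i) j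

theorem abs_exp_apply_le {M M' : Matrix m m ℝ} (hM : ∀ i j, |M i j| ≤ M' i j) (i j : m) :
    |exp M i j| ≤ exp M' i j :=
  (hasSum_exp_apply M i j).norm_le_of_bounded (hasSum_exp_apply M' i j) fun k => by
    rw [Real.norm_eq_abs, abs_mul, abs_of_nonneg (by positivity)]
    exact mul_le_mul_of_nonneg_left (abs_pow_apply_le hM k i j) (by positivity)

end Exponential

theorem stmt3_general {n : ℕ} (A : Matrix (Fin n) (Fin n) ℝ) (t : ℝ) (ht : 0 ≤ t)
    (bc bΔ : Fin n → ℝ)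
    (x : Fin n → ℝ) (hx : ∀ i, |x i - bc i| ≤ bΔ i) :
    ∀ i, |(mexp (t • A) *ᵥ x - mexp (t • A) *ᵥ bc) i| ≤ (mexp (t • matAbs A) *ᵥ bΔ) i := by
  have hdom : ∀ i j, |(t • A) i j| ≤ (t • matAbs A) i j := fun i j => by
    simp [matAbs, abs_mul, abs_of_nonneg ht]
  rw [← mulVec_sub]
  exact abs_mulVec_le (abs_exp_apply_le hdom) hx

/-- `exp(A t)` maps the box `[b_c − b_Δ, b_c + b_Δ]` into the box
`[exp(A t) b_c − exp(|A| t) b_Δ, exp(A t) b_c + exp(|A| t) b_Δ]`. -/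
theorem stmt3 {n : ℕ} (A : Matrix (Fin n) (Fin n) ℝ) (t : ℝ) (ht : 0 ≤ t)
    (bc bΔ : Fin n → ℝ) (hbΔ : ∀ i, 0 ≤ bΔ i)
    (x : Fin n → ℝ) (hx : ∀ i, |x i - bc i| ≤ bΔ i) :
    ∀ i, |(mexp (t • A) *ᵥ x - mexp (t • A) *ᵥ bc) i| ≤ (mexp (t • matAbs A) *ᵥ bΔ) i :=
  stmt3_general A t ht bc bΔ x hx
end

section
/- Let i ≥ 2 be an integer and δ > 0 a real number. Then the image of the interval [0, δ] under the map t ↦ t^i − t δ^{i−1} is exactly the interval [(i^{−i/(i−1)} − i^{−1/(i−1)}) δ^i, 0]. -/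
/-! The map `f t = tⁱ - t δ^{i-1}` lies above its tangent line at every `s > 0` (Bernoulli's
inequality). At `t₀ = i^{-1/(i-1)} δ ∈ (0, δ]` that tangent is horizontal, since
`i t₀^{i-1} = δ^{i-1}`, so `f t₀` is the minimum of `f` on `[0, δ]`. The maximum `0` is taken at
`t = 0`, because `tⁱ ≤ t δ^{i-1}` on `[0, δ]`, and the intermediate value theorem gives every value
in between. -/

open Set

theorem ContinuousOn.image_Icc_of_isMinOn_of_isMaxOn {α β : Type*}
    [ConditionallyCompleteLinearOrder α] [TopologicalSpace α] [OrderTopology α] [DenselyOrdered α]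
    [LinearOrder β] [TopologicalSpace β] [OrderClosedTopology β]
    {f : α → β} {a b m M : α} (hf : ContinuousOn f (Icc a b)) (hm : m ∈ Icc a b)
    (hM : M ∈ Icc a b) (hmin : IsMinOn f (Icc a b) m) (hmax : IsMaxOn f (Icc a b) M) :
    f '' Icc a b = Icc (f m) (f M) := by
  refine Subset.antisymm ?_ fun y hy => ?_
  · rintro _ ⟨t, ht, rfl⟩
    exact ⟨hmin ht, hmax ht⟩
  · have hsub : uIcc m M ⊆ Icc a b := uIcc_subset_Icc hm hM
    have hy' : y ∈ uIcc (f m) (f M) := Icc_subset_uIcc hy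
    exact image_mono hsub (intermediate_value_uIcc (hf.mono hsub) hy')

section OrderedField

variable {K : Type*} [Field K] [LinearOrder K] [IsStrictOrderedRing K]

theorem pow_add_mul_sub_le_pow (n : ℕ) {s t : K} (hs : 0 < s) (ht : 0 ≤ t) :
    s ^ n + n * s ^ (n - 1) * (t - s) ≤ t ^ n := by
  have hbernoulli := one_add_mul_sub_le_pow (by linarith [div_nonneg ht hs.le] : -1 ≤ t / s) n
  have := mul_le_mul_of_nonneg_left hbernoulli (pow_pos hs n).le
  rw [div_pow, mul_div_cancel₀ _ (pow_pos hs n).ne'] at this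
  rcases n with _ | n
  · simp
  · rw [Nat.add_sub_cancel]
    convert this using 1
    field_simp
    ring

theorem isMinOn_pow_sub_mul (n : ℕ) {s : K} (hs : 0 < s) :
    IsMinOn (fun t : K => t ^ n - t * (n * s ^ (n - 1))) (Ici 0) s := by
  intro t (ht : 0 ≤ t)
  have := pow_add_mul_sub_le_pow n hs ht
  show _ ≤ _
  linarith

end OrderedField

theorem pow_le_mul_pow_pred {R : Type*} [CommSemiring R] [PartialOrder R] [IsOrderedRing R]
    {n : ℕ} (hn : n ≠ 0) {t δ : R} (ht : 0 ≤ t) (htδ : t ≤ δ) : t ^ n ≤ t * δ ^ (n - 1) := by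
  rw [← mul_pow_sub_one hn]
  exact mul_le_mul_of_nonneg_left (pow_le_pow_left₀ ht htδ _) ht

theorem natCast_mul_rpow_neg_inv_pred_pow_pred {n : ℕ} (hn : 1 < n) :
    (n : ℝ) * ((n : ℝ) ^ (-1 / ((n : ℝ) - 1))) ^ (n - 1) = 1 := by
  have hpred : (0 : ℝ) < n - 1 := by
    have : (1 : ℝ) < n := by exact_mod_cast hn
    linarith
  rw [← Real.rpow_natCast, ← Real.rpow_mul n.cast_nonneg, Nat.cast_pred (by omega),
    div_mul_cancel₀ _ hpred.ne', Real.rpow_neg_one, mul_inv_cancel₀ (by positivity)]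

/-- for an integer `i ≥ 2` and `δ > 0`, the image of `[0, δ]` under
`t ↦ tⁱ − t δ^{i−1}` is exactly `[(i^{−i/(i−1)} − i^{−1/(i−1)}) δⁱ, 0]`. -/
theorem stmt5 (i : ℕ) (hi : 2 ≤ i) (δ : ℝ) (hδ : 0 < δ) :
    (fun t : ℝ => t ^ i - t * δ ^ (i - 1)) '' Set.Icc 0 δ =
      Set.Icc
        (((i : ℝ) ^ (-(i : ℝ) / ((i : ℝ) - 1)) - (i : ℝ) ^ (-(1 : ℝ) / ((i : ℝ) - 1)))
          * δ ^ i)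
        0 := by
  set c : ℝ := (i : ℝ) ^ (-(1 : ℝ) / ((i : ℝ) - 1))
  have hc_pos : 0 < c := by positivity
  have hi_one : (1 : ℝ) ≤ i := by exact_mod_cast (by omega : 1 ≤ i)
  have hc_le_one : c ≤ 1 := Real.rpow_le_one_of_one_le_of_nonpos hi_one
    (div_nonpos_of_nonpos_of_nonneg (by norm_num) (sub_nonneg.2 hi_one))
  have hcrit : (i : ℝ) * (c * δ) ^ (i - 1) = δ ^ (i - 1) := by
    rw [mul_pow, ← mul_assoc, natCast_mul_rpow_neg_inv_pred_pow_pred hi, one_mul]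
  have hmin : IsMinOn (fun t : ℝ => t ^ i - t * δ ^ (i - 1)) (Icc 0 δ) (c * δ) := by
    simpa only [hcrit] using
      (isMinOn_pow_sub_mul i (mul_pos hc_pos hδ)).on_subset Icc_subset_Ici_self
  have hmax : IsMaxOn (fun t : ℝ => t ^ i - t * δ ^ (i - 1)) (Icc 0 δ) 0 := by
    intro t ht
    simpa [zero_pow (by omega : i ≠ 0)] using pow_le_mul_pow_pred (by omega) ht.1 ht.2
  rw [ContinuousOn.image_Icc_of_isMinOn_of_isMaxOn (by fun_prop)
    ⟨by positivity, mul_le_of_le_one_left hδ.le hc_le_one⟩ ⟨le_rfl, hδ.le⟩ hmin hmax]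
  congr 1
  · have hc_pow : c ^ i = (i : ℝ) ^ (-(i : ℝ) / ((i : ℝ) - 1)) := by
      rw [← Real.rpow_natCast, ← Real.rpow_mul (by positivity)]
      ring_nf
    rw [mul_pow, hc_pow, mul_assoc, mul_pow_sub_one (by omega : i ≠ 0)]
    ring
  · simp [zero_pow (by omega : i ≠ 0)]
end

section
/- Let H ∈ ℝ^{ξ×ξ}, δ > 0, and let η ≥ 2 be an integer such that ‖H‖_∞ δ / (η + 2) < 1, and set Φ = (‖H‖_∞ δ)^{η+1} / ((η+1)!) · 1/(1 − ‖H‖_∞ δ/(η+2)). Then for every t ∈ [0, δ] there exist real numbers τ_i ∈ [(i^{−i/(i−1)} − i^{−1/(i−1)}) δ^i, 0] for i = 2, …, η and a matrix E ∈ ℝ^{ξ×ξ} with |E_{jk}| ≤ Φ for all j, k, such that exp(H t) − I − (t/δ)(exp(H δ) − I) = Σ_{i=2}^η τ_i H^i / i! + E. -/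
/-
Expanding both exponentials, the terms of order 0 and 1 cancel and the coefficient of `Hⁿ/n!`
is `τₙ = tⁿ - t δⁿ⁻¹ = δⁿ (sⁿ - s)` with `s = t/δ ∈ [0, 1]`. On `[0, 1]`, `sⁿ - s ≤ 0`, and by
convexity `sⁿ - s` is bounded below by its value at the point `a = n^(-1/(n-1))` where the
tangent of `sⁿ` has slope one, which gives `tauLo n δ`. The terms of order `> η` form `E`;
since `|τₙ| ≤ δⁿ`, its norm is at most the exponential tail `∑_{n > η} (‖H‖δ)ⁿ/n!`, which is
dominated by a geometric series of ratio `‖H‖δ/(η+2)`.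
-/

open Matrix Set

/-- Maximum absolute row sum norm (`‖·‖_∞`) of a matrix. -/
noncomputable def rowSumNorm {m : ℕ} (H : Matrix (Fin m) (Fin m) ℝ) : ℝ :=
  ⨆ i, ∑ j, |H i j|

/-- Lower endpoint `(i^{−i/(i−1)} − i^{−1/(i−1)}) δ^i` of the correction interval. -/
noncomputable def tauLo (i : ℕ) (δ : ℝ) : ℝ :=
  ((i : ℝ) ^ (-(i : ℝ) / ((i : ℝ) - 1)) - (i : ℝ) ^ (-(1 : ℝ) / ((i : ℝ) - 1))) * δ ^ i

open scoped Nat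

lemma pow_succ_tangent_le {a s : ℝ} (ha : 0 < a) (hs : 0 ≤ s) (n : ℕ) :
    a ^ (n + 1) + (n + 1) * a ^ n * (s - a) ≤ s ^ (n + 1) := by
  have hx : -2 ≤ s / a - 1 := by linarith [div_nonneg hs ha.le]
  calc a ^ (n + 1) + (n + 1) * a ^ n * (s - a)
        = a ^ (n + 1) * (1 + ((n + 1 : ℕ) : ℝ) * (s / a - 1)) := by
          field_simp; push_cast; ring
    _ ≤ a ^ (n + 1) * (1 + (s / a - 1)) ^ (n + 1) := by gcongr; exact one_add_mul_le_pow hx _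
    _ = s ^ (n + 1) := by rw [← mul_pow]; field_simp; ring_nf

lemma rpow_neg_div_sub_one_sub_le_pow_sub_self {i : ℕ} (hi : 2 ≤ i) {s : ℝ} (hs : 0 ≤ s) :
    (i : ℝ) ^ (-(i : ℝ) / ((i : ℝ) - 1)) - (i : ℝ) ^ (-(1 : ℝ) / ((i : ℝ) - 1)) ≤ s ^ i - s := by
  obtain ⟨n, rfl⟩ : ∃ n, i = n + 1 := ⟨i - 1, by omega⟩
  have hn : (0 : ℝ) < n := by exact_mod_cast (by omega : 0 < n)
  have hpos : (0 : ℝ) < (n + 1 : ℕ) := by positivity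
  set a : ℝ := ((n + 1 : ℕ) : ℝ) ^ (-(1 : ℝ) / (((n + 1 : ℕ) : ℝ) - 1))
  have hsub : ((n + 1 : ℕ) : ℝ) - 1 = n := by push_cast; ring
  have ha_pow : a ^ n = (((n + 1 : ℕ) : ℝ))⁻¹ := by
    rw [← Real.rpow_natCast, ← Real.rpow_mul hpos.le, hsub, div_mul_cancel₀ _ hn.ne',
      Real.rpow_neg_one]
  have ha_pow_succ :
      a ^ (n + 1) = ((n + 1 : ℕ) : ℝ) ^ (-((n + 1 : ℕ) : ℝ) / (((n + 1 : ℕ) : ℝ) - 1)) := by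
    rw [← Real.rpow_natCast, ← Real.rpow_mul hpos.le, hsub]
    ring_nf
  have htangent : a ^ (n + 1) + (n + 1) * a ^ n * (s - a) ≤ s ^ (n + 1) :=
    pow_succ_tangent_le (Real.rpow_pos_of_pos hpos _) hs n
  have hslope : ((n : ℝ) + 1) * a ^ n = 1 := by rw [ha_pow]; push_cast; field_simp
  rw [hslope] at htangent
  rw [← ha_pow_succ]
  linarith

/-- The coefficient `τₙ` of `Hⁿ/n!` in `exp(tH) - I - (t/δ)(exp(δH) - I)`, for `n ≥ 1`. -/
noncomputable def corrCoeff (δ t : ℝ) (n : ℕ) : ℝ := t ^ n - t * δ ^ (n - 1)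

section corrCoeff

variable {δ t : ℝ}

@[simp]
lemma corrCoeff_one : corrCoeff δ t 1 = 0 := by simp [corrCoeff]

lemma corrCoeff_eq_mul_pow {n : ℕ} (hn : 1 ≤ n) (hδ : δ ≠ 0) :
    corrCoeff δ t n = ((t / δ) ^ n - t / δ) * δ ^ n := by
  obtain ⟨k, rfl⟩ : ∃ k, n = k + 1 := ⟨n - 1, by omega⟩
  simp only [corrCoeff, Nat.add_sub_cancel, div_pow]
  field_simp
  ring

lemma tauLo_le_corrCoeff {i : ℕ} (hi : 2 ≤ i) (hδ : 0 < δ) (ht : 0 ≤ t) :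
    tauLo i δ ≤ corrCoeff δ t i := by
  rw [tauLo, corrCoeff_eq_mul_pow (by omega) hδ.ne']
  exact mul_le_mul_of_nonneg_right
    (rpow_neg_div_sub_one_sub_le_pow_sub_self hi (div_nonneg ht hδ.le)) (pow_nonneg hδ.le _)

lemma corrCoeff_nonpos {n : ℕ} (hn : 1 ≤ n) (ht : t ∈ Icc 0 δ) : corrCoeff δ t n ≤ 0 := by
  obtain ⟨k, rfl⟩ : ∃ k, n = k + 1 := ⟨n - 1, by omega⟩
  rw [corrCoeff, Nat.add_sub_cancel, pow_succ', sub_nonpos]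
  exact mul_le_mul_of_nonneg_left (pow_le_pow_left₀ ht.1 ht.2 k) ht.1

lemma abs_corrCoeff_le {n : ℕ} (hn : 1 ≤ n) (ht : t ∈ Icc 0 δ) : |corrCoeff δ t n| ≤ δ ^ n := by
  obtain ⟨k, rfl⟩ : ∃ k, n = k + 1 := ⟨n - 1, by omega⟩
  have h1 : t * δ ^ k ≤ δ ^ (k + 1) := by
    rw [pow_succ']; exact mul_le_mul_of_nonneg_right ht.2 (pow_nonneg (ht.1.trans ht.2) k)
  have h2 : 0 ≤ t ^ (k + 1) := pow_nonneg ht.1 _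
  rw [abs_of_nonpos (corrCoeff_nonpos le_add_self ht), corrCoeff, Nat.add_sub_cancel]
  linarith

end corrCoeff

lemma pow_add_div_factorial_le {x : ℝ} (hx : 0 ≤ x) (m n : ℕ) :
    x ^ (m + n) / (m + n)! ≤ x ^ m / m ! * (x / (m + 1)) ^ n := by
  have hfac : (m ! : ℝ) * (m + 1) ^ n ≤ (m + n)! := by
    exact_mod_cast Nat.factorial_mul_pow_le_factorial
  rw [div_pow, div_mul_div_comm, ← pow_add]
  gcongr

lemma Finset.sum_range_succ_eq_sum_Icc_two {M : Type*} [AddCommMonoid M] {f : ℕ → M}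
    (hf : f 1 = 0) (m : ℕ) : ∑ n ∈ Finset.range m, f (n + 1) = ∑ i ∈ Finset.Icc 2 m, f i := by
  induction m with
  | zero => simp
  | succ m ih =>
    rcases Nat.eq_zero_or_pos m with rfl | hm
    · simp [hf]
    · rw [Finset.sum_range_succ, ih, Finset.sum_Icc_succ_top (by omega)]

section BanachAlgebra

variable {𝔸 : Type*} [NormedRing 𝔸] [NormedAlgebra ℝ 𝔸]

noncomputable def corrTerm (x : 𝔸) (δ t : ℝ) (n : ℕ) : 𝔸 := (corrCoeff δ t n / n !) • x ^ n

lemma norm_corrTerm_le (x : 𝔸) {δ t : ℝ} (ht : t ∈ Icc 0 δ) {n : ℕ} (hn : 1 ≤ n) :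
    ‖corrTerm x δ t n‖ ≤ (‖x‖ * δ) ^ n / n ! := by
  calc ‖corrTerm x δ t n‖ ≤ |corrCoeff δ t n| / n ! * ‖x‖ ^ n := by
        rw [corrTerm, norm_smul, Real.norm_eq_abs, abs_div, Nat.abs_cast]
        gcongr
        exact norm_pow_le' x hn
    _ ≤ δ ^ n / n ! * ‖x‖ ^ n := by gcongr; exact abs_corrCoeff_le hn ht
    _ = (‖x‖ * δ) ^ n / n ! := by ring

lemma norm_tsum_corrTerm_tail_le (x : 𝔸) {δ t : ℝ} (ht : t ∈ Icc 0 δ) (m : ℕ)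
    (hq : ‖x‖ * δ / ((m : ℝ) + 2) < 1) :
    ‖∑' n, corrTerm x δ t (n + m + 1)‖ ≤
      (‖x‖ * δ) ^ (m + 1) / ((m + 1)! : ℝ) * (1 / (1 - ‖x‖ * δ / ((m : ℝ) + 2))) := by
  have hxδ : 0 ≤ ‖x‖ * δ := mul_nonneg (norm_nonneg x) (ht.1.trans ht.2)
  have hq0 : 0 ≤ ‖x‖ * δ / ((m : ℝ) + 2) := by positivity
  rw [one_div]
  refine tsum_of_norm_bounded
    ((hasSum_geometric_of_lt_one hq0 hq).mul_left ((‖x‖ * δ) ^ (m + 1) / (m + 1)!)) fun n => ?_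
  calc ‖corrTerm x δ t (n + m + 1)‖ ≤ (‖x‖ * δ) ^ (m + 1 + n) / (m + 1 + n)! := by
        rw [show n + m + 1 = m + 1 + n by ring]
        exact norm_corrTerm_le x ht (by omega)
    _ ≤ _ := by
        convert pow_add_div_factorial_le hxδ (m + 1) n using 3
        push_cast; ring

variable [CompleteSpace 𝔸]

lemma hasSum_exp_smul_sub_one (x : 𝔸) (s : ℝ) :
    HasSum (fun n : ℕ => (s ^ (n + 1) / (n + 1)!) • x ^ (n + 1))
      (NormedSpace.exp (s • x) - 1) := by
  have h := NormedSpace.exp_series_hasSum_exp' (𝕂 := ℝ) (s • x)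
  rw [← hasSum_nat_add_iff' 1] at h
  simpa [smul_pow, smul_smul, div_eq_inv_mul, mul_comm] using h

lemma hasSum_corrTerm (x : 𝔸) {δ : ℝ} (hδ : δ ≠ 0) (t : ℝ) :
    HasSum (fun n => corrTerm x δ t (n + 1))
      (NormedSpace.exp (t • x) - 1 - (t / δ) • (NormedSpace.exp (δ • x) - 1)) := by
  have hterm : (fun n => corrTerm x δ t (n + 1)) = fun n =>
      (t ^ (n + 1) / (n + 1)!) • x ^ (n + 1) -
        (t / δ) • (δ ^ (n + 1) / (n + 1)!) • x ^ (n + 1) := by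
    funext n
    rw [corrTerm, corrCoeff, Nat.add_sub_cancel, smul_smul, ← sub_smul]
    congr 1
    field_simp
    ring
  rw [hterm]
  exact (hasSum_exp_smul_sub_one x t).sub ((hasSum_exp_smul_sub_one x δ).const_smul (t / δ))

lemma exp_corr_eq_sum_add_tail (x : 𝔸) {δ : ℝ} (hδ : δ ≠ 0) (t : ℝ) (m : ℕ) :
    NormedSpace.exp (t • x) - 1 - (t / δ) • (NormedSpace.exp (δ • x) - 1) =
      ∑ i ∈ Finset.Icc 2 m, corrTerm x δ t i + ∑' n, corrTerm x δ t (n + m + 1) := by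
  rw [← (hasSum_corrTerm x hδ t).tsum_eq,
    ← (hasSum_corrTerm x hδ t).summable.sum_add_tsum_nat_add m,
    Finset.sum_range_succ_eq_sum_Icc_two (by simp [corrTerm])]

end BanachAlgebra

section LinftyOpNorm

attribute [local instance] Matrix.linftyOpNormedAddCommGroup

variable {m n : Type*} [Fintype m] [Fintype n]

lemma rowSumNorm_eq_linfty_opNorm {ξ : ℕ} (H : Matrix (Fin ξ) (Fin ξ) ℝ) :
    rowSumNorm H = ‖H‖ := by
  rw [rowSumNorm, Matrix.linfty_opNorm_def, Finset.sup_univ_eq_ciSup, NNReal.coe_iSup]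
  simp [NNReal.coe_sum]

lemma abs_apply_le_linfty_opNorm (A : Matrix m n ℝ) (i : m) (j : n) : |A i j| ≤ ‖A‖ := by
  rw [Matrix.linfty_opNorm_def]
  calc |A i j| ≤ ∑ k, |A i k| :=
        Finset.single_le_sum (fun k _ => abs_nonneg (A i k)) (Finset.mem_univ j)
    _ = ((∑ k, ‖A i k‖₊ : NNReal) : ℝ) := by simp [NNReal.coe_sum]
    _ ≤ _ := NNReal.coe_le_coe.2 (Finset.le_sup (f := fun i => ∑ k, ‖A i k‖₊) (Finset.mem_univ i))

end LinftyOpNorm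

theorem stmt6_general {ξ : ℕ} (H : Matrix (Fin ξ) (Fin ξ) ℝ) (δ : ℝ) (hδ : 0 < δ)
    (η : ℕ) (hsmall : rowSumNorm H * δ / ((η : ℝ) + 2) < 1)
    (Φ : ℝ)
    (hΦ : Φ = (rowSumNorm H * δ) ^ (η + 1) / ((Nat.factorial (η + 1) : ℝ))
        * (1 / (1 - rowSumNorm H * δ / ((η : ℝ) + 2))))
    (t : ℝ) (ht : t ∈ Set.Icc 0 δ) :
    ∃ (τ : ℕ → ℝ) (E : Matrix (Fin ξ) (Fin ξ) ℝ),
      (∀ i ∈ Finset.Icc 2 η, τ i ∈ Set.Icc (tauLo i δ) 0) ∧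
      (∀ j k, |E j k| ≤ Φ) ∧
      mexp (t • H) - 1 - (t / δ) • (mexp (δ • H) - 1) =
        ∑ i ∈ Finset.Icc 2 η, (τ i / (Nat.factorial i : ℝ)) • H ^ i + E := by
  let : NormedRing (Matrix (Fin ξ) (Fin ξ) ℝ) := Matrix.linftyOpNormedRing
  let : NormedAlgebra ℝ (Matrix (Fin ξ) (Fin ξ) ℝ) := Matrix.linftyOpNormedAlgebra
  rw [rowSumNorm_eq_linfty_opNorm] at hsmall hΦ
  refine ⟨corrCoeff δ t, ∑' n, corrTerm H δ t (n + η + 1), fun i hi => ?_, fun j k => ?_,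
    exp_corr_eq_sum_add_tail H hδ.ne' t η⟩
  · have hi := (Finset.mem_Icc.1 hi).1
    exact ⟨tauLo_le_corrCoeff hi hδ ht.1, corrCoeff_nonpos (by omega) ht⟩
  · exact hΦ ▸ (abs_apply_le_linfty_opNorm _ j k).trans (norm_tsum_corrTerm_tail_le H ht η hsmall)

/-- Correction matrix `𝓕`: for `t ∈ [0, δ]` the matrix
`exp(H t) − I − (t/δ)(exp(H δ) − I)` can be written as `Σ_{i=2}^η τᵢ Hⁱ/i! + E` with
`τᵢ ∈ [(i^{−i/(i−1)} − i^{−1/(i−1)}) δⁱ, 0]` and `|E_{jk}| ≤ Φ`. -/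
theorem stmt6 {ξ : ℕ} (H : Matrix (Fin ξ) (Fin ξ) ℝ) (δ : ℝ) (hδ : 0 < δ)
    (η : ℕ) (hη : 2 ≤ η) (hsmall : rowSumNorm H * δ / ((η : ℝ) + 2) < 1)
    (Φ : ℝ)
    (hΦ : Φ = (rowSumNorm H * δ) ^ (η + 1) / ((Nat.factorial (η + 1) : ℝ))
        * (1 / (1 - rowSumNorm H * δ / ((η : ℝ) + 2))))
    (t : ℝ) (ht : t ∈ Set.Icc 0 δ) :
    ∃ (τ : ℕ → ℝ) (E : Matrix (Fin ξ) (Fin ξ) ℝ),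
      (∀ i ∈ Finset.Icc 2 η, τ i ∈ Set.Icc (tauLo i δ) 0) ∧
      (∀ j k, |E j k| ≤ Φ) ∧
      mexp (t • H) - 1 - (t / δ) • (mexp (δ • H) - 1) =
        ∑ i ∈ Finset.Icc 2 η, (τ i / (Nat.factorial i : ℝ)) • H ^ i + E :=
  stmt6_general H δ hδ η hsmall Φ hΦ t ht
end

section
/- Let A ∈ ℝ^{n×n} and u ∈ ℝ^n, and let Ã ∈ ℝ^{(n+1)×(n+1)} be the block matrix whose upper-left n×n block is A, whose last column has u as its first n entries and 0 as its last entry, and whose last row is zero. Then for every t ∈ ℝ, the first n components of exp(Ã t) e_{n+1} equal (∫_0^t exp(A s) ds) u and the last component of exp(Ã t) e_{n+1} equals 1. -/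
open Matrix

/-- The augmented matrix `Ã = [[A, u], [0, 0]]`. -/
def aug {n : ℕ} (A : Matrix (Fin n) (Fin n) ℝ) (u : Fin n → ℝ) :
    Matrix (Fin (n + 1)) (Fin (n + 1)) ℝ :=
  Matrix.of fun i j =>
    Fin.lastCases 0 (fun i' => Fin.lastCases (u i') (fun j' => A i' j') j) i

/-- The entrywise integral `∫_0^t exp(A s) ds`. -/
noncomputable def intExp {n : ℕ} (A : Matrix (Fin n) (Fin n) ℝ) (t : ℝ) :
    Matrix (Fin n) (Fin n) ℝ :=
  Matrix.of fun i j => ∫ s in (0 : ℝ)..t, mexp (s • A) i j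

/-! Since `Ãᵏ⁺¹ = [[Aᵏ⁺¹, Aᵏ u], [0, 0]]`, the exponential series of `Ã` has `exp A` as its
upper-left block and `1` in its corner. Hence, as `d/dt exp (t Ã) = exp (t Ã) Ã`, the top of the
last column of `exp (t Ã)` has derivative `exp (t A) u`; it vanishes at `t = 0`, so by the
fundamental theorem of calculus it equals `∫₀ᵗ exp (s A) u ds`. -/

attribute [local instance] Matrix.linftyOpNormedRing Matrix.linftyOpNormedAlgebra

section Aug

variable {n : ℕ} (A B : Matrix (Fin n) (Fin n) ℝ) (u v : Fin n → ℝ)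

@[simp] lemma aug_last (j : Fin (n + 1)) : aug A u (Fin.last n) j = 0 := by
  simp [aug]

@[simp] lemma aug_castSucc_last (i : Fin n) : aug A u i.castSucc (Fin.last n) = u i := by
  simp [aug]

@[simp] lemma aug_castSucc_castSucc (i j : Fin n) : aug A u i.castSucc j.castSucc = A i j := by
  simp [aug]

lemma smul_aug (t : ℝ) : t • aug A u = aug (t • A) (t • u) := by
  ext i j
  induction i using Fin.lastCases with
  | last => simp
  | cast i =>
    induction j using Fin.lastCases with
    | last => simp
    | cast j => simp

lemma aug_mul_aug : aug A u * aug B v = aug (A * B) (A *ᵥ v) := by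
  ext i j
  induction i using Fin.lastCases with
  | last => simp [mul_apply]
  | cast i =>
    induction j using Fin.lastCases with
    | last => simp [mul_apply, Fin.sum_univ_castSucc, mulVec, dotProduct]
    | cast j => simp [mul_apply, Fin.sum_univ_castSucc]

lemma aug_pow_succ (k : ℕ) : aug A u ^ (k + 1) = aug (A ^ (k + 1)) (A ^ k *ᵥ u) := by
  induction k with
  | zero => simp
  | succ k ih => rw [pow_succ', ih, aug_mul_aug, ← pow_succ', mulVec_mulVec, ← pow_succ']

end Aug

section Exp

variable {m : ℕ}

lemma mexp_apply_eq_tsum (M : Matrix (Fin m) (Fin m) ℝ) (i j : Fin m) :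
    mexp M i j = ∑' k : ℕ, ((k.factorial : ℝ)⁻¹ • M ^ k) i j := by
  have hsum := NormedSpace.expSeries_summable' (𝕂 := ℝ) M
  rw [mexp, NormedSpace.exp_eq_tsum ℝ]
  exact (congrFun (tsum_apply hsum) j).trans (tsum_apply (Pi.summable.mp hsum i))

lemma hasDerivAt_mexp_smul_apply (M : Matrix (Fin m) (Fin m) ℝ) (i j : Fin m) (s : ℝ) :
    HasDerivAt (fun r : ℝ => mexp (r • M) i j) ((mexp (s • M) * M) i j) s :=
  (LinearMap.toContinuousLinearMap (entryLinearMap ℝ ℝ i j)).hasFDerivAt.comp_hasDerivAt s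
    (hasDerivAt_exp_smul_const M s)

lemma continuous_mexp_smul (M : Matrix (Fin m) (Fin m) ℝ) :
    Continuous fun s : ℝ => mexp (s • M) :=
  NormedSpace.exp_continuous.comp (continuous_id.smul continuous_const)

end Exp

section ExpAug

variable {n : ℕ} (A : Matrix (Fin n) (Fin n) ℝ) (u : Fin n → ℝ)

lemma mexp_aug_castSucc_castSucc (i j : Fin n) :
    mexp (aug A u) i.castSucc j.castSucc = mexp A i j := by
  rw [mexp_apply_eq_tsum, mexp_apply_eq_tsum]
  refine tsum_congr fun k => ?_
  cases k with
  | zero => simp [one_apply]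
  | succ k => simp [aug_pow_succ]

lemma mexp_aug_last_last : mexp (aug A u) (Fin.last n) (Fin.last n) = 1 := by
  rw [mexp_apply_eq_tsum, tsum_eq_single 0]
  · simp
  · rintro (_ | k) hk
    · exact absurd rfl hk
    · simp [aug_pow_succ]

lemma mexp_smul_aug_mul_aug_castSucc_last (s : ℝ) (i : Fin n) :
    (mexp (s • aug A u) * aug A u) i.castSucc (Fin.last n) = (mexp (s • A) *ᵥ u) i := by
  simp [mul_apply, Fin.sum_univ_castSucc, smul_aug, mexp_aug_castSucc_castSucc, mulVec,
    dotProduct]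

lemma mexp_smul_aug_castSucc_last (t : ℝ) (i : Fin n) :
    mexp (t • aug A u) i.castSucc (Fin.last n) = ∫ s in (0 : ℝ)..t, (mexp (s • A) *ᵥ u) i := by
  have hcont : Continuous fun s : ℝ => (mexp (s • A) *ᵥ u) i :=
    (continuous_apply i).comp ((continuous_mexp_smul A).matrix_mulVec continuous_const)
  rw [intervalIntegral.integral_eq_sub_of_hasDerivAt (fun s _ => by
      simpa only [mexp_smul_aug_mul_aug_castSucc_last] using
        hasDerivAt_mexp_smul_apply (aug A u) i.castSucc (Fin.last n) s)
    (hcont.intervalIntegrable 0 t)]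
  simp [mexp, one_apply_ne (Fin.castSucc_lt_last i).ne]

lemma intExp_mulVec_apply (t : ℝ) (i : Fin n) :
    (intExp A t *ᵥ u) i = ∫ s in (0 : ℝ)..t, (mexp (s • A) *ᵥ u) i := by
  have hcont (j : Fin n) : Continuous fun s : ℝ => mexp (s • A) i j :=
    (continuous_mexp_smul A).matrix_elem i j
  simp only [intExp, mulVec, dotProduct, of_apply]
  rw [intervalIntegral.integral_finsetSum (f := fun j s => mexp (s • A) i j * u j) fun j _ =>
    ((hcont j).mul continuous_const).intervalIntegrable 0 t]
  simp only [intervalIntegral.integral_mul_const]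

end ExpAug

/-- the first `n` components of `exp(Ã t) e_{n+1}` equal
`(∫_0^t exp(A s) ds) u`, and its last component equals `1`. -/
theorem stmt11 {n : ℕ} (A : Matrix (Fin n) (Fin n) ℝ) (u : Fin n → ℝ) (t : ℝ) :
    (∀ i : Fin n,
      (mexp (t • aug A u) *ᵥ Pi.single (Fin.last n) 1) i.castSucc = (intExp A t *ᵥ u) i) ∧
    (mexp (t • aug A u) *ᵥ Pi.single (Fin.last n) 1) (Fin.last n) = 1 := by
  simp only [mulVec_single_one, col_apply]
  refine ⟨fun i => ?_, ?_⟩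
  · rw [mexp_smul_aug_castSucc_last, intExp_mulVec_apply]
  · rw [smul_aug, mexp_aug_last_last]
end

section
/- Let Z₁ = Z(c; g^(1),…,g^(p)) and Z₂ = Z(d; h^(1),…,h^(p)) be zonotopes in ℝ^n with the same number p of generators. Then the convex hull of Z₁ ∪ Z₂ is contained in the zonotope Z(½(c + d); ½(g^(1) + h^(1)),…,½(g^(p) + h^(p)), ½(c − d), ½(g^(1) − h^(1)),…,½(g^(p) − h^(p))). -/
open Set

lemma zonotope_convex {n : ℕ} {ι : Type*} [Fintype ι] (c : Fin n → ℝ) (g : ι → Fin n → ℝ) :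
    Convex ℝ (zonotope c g) := by
  rintro x ⟨β, hβ, rfl⟩ y ⟨γ, hγ, rfl⟩ a b ha hb hab
  refine ⟨fun i => a * β i + b * γ i, fun i => ?_, ?_⟩
  · obtain ⟨hb1, hb2⟩ := hβ i
    obtain ⟨hg1, hg2⟩ := hγ i
    have t1 := mul_le_mul_of_nonneg_left hb1 ha
    have t2 := mul_le_mul_of_nonneg_left hb2 ha
    have t3 := mul_le_mul_of_nonneg_left hg1 hb
    have t4 := mul_le_mul_of_nonneg_left hg2 hb
    constructor
    · show -1 ≤ a * β i + b * γ i
      nlinarith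
    · show a * β i + b * γ i ≤ 1
      nlinarith
  · have : ∀ i, (a * β i + b * γ i) • g i = a • (β i • g i) + b • (γ i • g i) := by
      intro i; simp [add_smul, smul_smul]
    rw [Finset.sum_congr rfl (fun i _ => this i), Finset.sum_add_distrib,
      ← Finset.smul_sum, ← Finset.smul_sum]
    have hc : a • c + b • c = c := by rw [← add_smul, hab, one_smul]
    simp only [smul_add]
    rw [show a • c + a • ∑ i, β i • g i + (b • c + b • ∑ i, γ i • g i)
      = (a • c + b • c) + (a • ∑ i, β i • g i + b • ∑ i, γ i • g i) by ring_nf, hc]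

/-- Convex hull of two zonotopes: the convex hull of
`Z(c; g) ∪ Z(d; h)` is contained in the zonotope with center `½(c+d)` and generators
`½(g⁽ⁱ⁾+h⁽ⁱ⁾)` (for `i = 1,…,p`), `½(c−d)`, and `½(g⁽ⁱ⁾−h⁽ⁱ⁾)` (for `i = 1,…,p`). -/
theorem stmt17 {n p : ℕ} (c d : Fin n → ℝ) (g h : Fin p → Fin n → ℝ) :
    convexHull ℝ (zonotope c g ∪ zonotope d h) ⊆
      zonotope ((1 / 2 : ℝ) • (c + d))
        (Sum.elim (fun i => (1 / 2 : ℝ) • (g i + h i))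
          (Sum.elim (fun _ : Unit => (1 / 2 : ℝ) • (c - d))
            (fun i : Fin p => (1 / 2 : ℝ) • (g i - h i)))) := by
  apply convexHull_min _ (zonotope_convex _ _)
  rintro x (⟨β, hβ, rfl⟩ | ⟨β, hβ, rfl⟩)
  · refine ⟨Sum.elim β (Sum.elim (fun _ => 1) β), ?_, ?_⟩
    · rintro (i | i | i) <;> simp only [Sum.elim_inl, Sum.elim_inr]
      · exact hβ i
      · exact ⟨by norm_num, le_refl 1⟩
      · exact hβ i
    · funext j
      simp only [Fintype.sum_sum_type, Sum.elim_inl, Sum.elim_inr,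
        Finset.univ_unique, Finset.sum_singleton, Pi.add_apply, Finset.sum_apply,
        Pi.smul_apply, Pi.sub_apply, smul_eq_mul, one_smul, one_mul]
      have key : ∑ i, β i * ((1/2) * (g i j + h i j)) + ∑ i, β i * ((1/2) * (g i j - h i j))
          = ∑ i, β i * g i j := by
        rw [← Finset.sum_add_distrib]
        exact Finset.sum_congr rfl fun i _ => by ring
      linarith [key]
  · refine ⟨Sum.elim β (Sum.elim (fun _ => -1) (fun i => -β i)), ?_, ?_⟩
    · rintro (i | i | i) <;> simp only [Sum.elim_inl, Sum.elim_inr]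
      · exact hβ i
      · exact ⟨le_refl _, by norm_num⟩
      · obtain ⟨h1, h2⟩ := hβ i; exact ⟨by linarith, by linarith⟩
    · funext j
      simp only [Fintype.sum_sum_type, Sum.elim_inl, Sum.elim_inr,
        Finset.univ_unique, Finset.sum_singleton, Pi.add_apply, Finset.sum_apply,
        Pi.smul_apply, Pi.sub_apply, smul_eq_mul, neg_smul, neg_mul, neg_one_mul,
        Pi.neg_apply]
      have key : ∑ i, β i * ((1/2) * (g i j + h i j)) + ∑ i, -(β i * ((1/2) * (g i j - h i j)))
          = ∑ i, β i * h i j := by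
        rw [← Finset.sum_add_distrib]
        exact Finset.sum_congr rfl fun i _ => by ring
      linarith [key]
end

section
/- Let M ∈ ℝ^{n×n}, let S ∈ ℝ^{n×n} have nonnegative entries, and let Z = Z(c; g^(1),…,g^(p)) be a zonotope in ℝ^n. For each i = 1,…,n let h^(i) ∈ ℝ^n be the vector whose i-th entry equals (S (|c| + Σ_{k=1}^p |g^(k)|))_i and whose other entries are zero, where |v| denotes the entrywise absolute value of a vector v. Then for every matrix G ∈ ℝ^{n×n} with |G_{ij}| ≤ S_{ij} for all i, j and every x ∈ Z, the vector (M + G) x belongs to the zonotope Z(M c; M g^(1),…,M g^(p), h^(1),…,h^(n)). -/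
/-!
Write `(M + G) x = M x + G x`. The image of `Z(c; g)` under `M` is `Z(M c; M g)`, while
`|G x| ≤ S |x| ≤ S (|c| + Σₖ |g⁽ᵏ⁾|)` entrywise, so `G x` lies in the box `Z(0; h⁽¹⁾, …, h⁽ⁿ⁾)`.
A Minkowski sum of zonotopes is the zonotope with the sum of the centers and the union of the
generators.
-/

open Matrix Set

section Zonotope

variable {n : ℕ} {ι κ : Type*} [Fintype ι] [Fintype κ]

theorem abs_le_of_mem_zonotope {c : Fin n → ℝ} {g : ι → Fin n → ℝ} {x : Fin n → ℝ}
    (hx : x ∈ zonotope c g) (j : Fin n) : |x j| ≤ |c j| + ∑ k, |g k j| := by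
  obtain ⟨β, hβ, rfl⟩ := hx
  have hcoeff : ∀ k, |β k * g k j| ≤ |g k j| := fun k => by
    rw [abs_mul]
    exact mul_le_of_le_one_left (abs_nonneg _) (abs_le.mpr (hβ k))
  simp only [Pi.add_apply, Finset.sum_apply, Pi.smul_apply, smul_eq_mul]
  calc |c j + ∑ k, β k * g k j| ≤ |c j| + |∑ k, β k * g k j| := abs_add_le _ _
    _ ≤ |c j| + ∑ k, |g k j| := by
      gcongr
      exact (Finset.abs_sum_le_sum_abs _ _).trans (Finset.sum_le_sum fun k _ => hcoeff k)

theorem mulVec_mem_zonotope (M : Matrix (Fin n) (Fin n) ℝ) {c : Fin n → ℝ}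
    {g : ι → Fin n → ℝ} {x : Fin n → ℝ} (hx : x ∈ zonotope c g) :
    M *ᵥ x ∈ zonotope (M *ᵥ c) (fun k => M *ᵥ g k) := by
  obtain ⟨β, hβ, rfl⟩ := hx
  refine ⟨β, hβ, ?_⟩
  simp only [mulVec_add, mulVec_sum, mulVec_smul]

theorem add_mem_zonotope {c c' : Fin n → ℝ} {g : ι → Fin n → ℝ} {g' : κ → Fin n → ℝ}
    {x y : Fin n → ℝ} (hx : x ∈ zonotope c g) (hy : y ∈ zonotope c' g') :
    x + y ∈ zonotope (c + c') (Sum.elim g g') := by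
  obtain ⟨β, hβ, rfl⟩ := hx
  obtain ⟨γ, hγ, rfl⟩ := hy
  refine ⟨Sum.elim β γ, fun k => k.rec hβ hγ, ?_⟩
  rw [Fintype.sum_sum_type]
  simp only [Sum.elim_inl, Sum.elim_inr]
  abel

theorem mem_zonotope_single_of_abs_le {d y : Fin n → ℝ} (hy : ∀ i, |y i| ≤ d i) :
    y ∈ zonotope 0 (fun i => Pi.single i (d i)) := by
  -- `y i / d i` is the coefficient; when `d i = 0` both `y i` and the junk value `y i / 0` vanish.
  refine ⟨fun i => y i / d i, fun i => ?_, ?_⟩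
  · rw [mem_Icc, ← abs_le, abs_div, abs_of_nonneg ((abs_nonneg _).trans (hy i))]
    exact div_le_one_of_le₀ (hy i) ((abs_nonneg _).trans (hy i))
  · have hcoeff : ∀ i, y i / d i * d i = y i := fun i => by
      rcases eq_or_ne (d i) 0 with hd | hd
      · have : y i = 0 := abs_nonpos_iff.mp (hd ▸ hy i)
        simp [hd, this]
      · exact div_mul_cancel₀ _ hd
    simp only [zero_add, ← Pi.single_smul, smul_eq_mul, hcoeff]
    exact (Finset.univ_sum_single y).symm

end Zonotope

theorem abs_mulVec_le_mulVec {m l : Type*} [Fintype l] {G S : Matrix m l ℝ}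
    (hG : ∀ i j, |G i j| ≤ S i j) {x b : l → ℝ} (hx : ∀ j, |x j| ≤ b j) (i : m) :
    |(G *ᵥ x) i| ≤ (S *ᵥ b) i := by
  simp only [mulVec, dotProduct]
  refine (Finset.abs_sum_le_sum_abs _ _).trans (Finset.sum_le_sum fun j _ => ?_)
  rw [abs_mul]
  exact mul_le_mul (hG i j) (hx j) (abs_nonneg _) ((abs_nonneg _).trans (hG i j))

theorem stmt18_general {n p : ℕ} (M S : Matrix (Fin n) (Fin n) ℝ)
    (c : Fin n → ℝ) (g : Fin p → Fin n → ℝ)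
    (h : Fin n → Fin n → ℝ)
    (hh : ∀ i : Fin n, h i = Pi.single i
      ((S *ᵥ (fun j => |c j| + ∑ k, |g k j|)) i))
    (G : Matrix (Fin n) (Fin n) ℝ) (hG : ∀ i j, |G i j| ≤ S i j)
    (x : Fin n → ℝ) (hx : x ∈ zonotope c g) :
    (M + G) *ᵥ x ∈
      zonotope (M *ᵥ c) (Sum.elim (fun i : Fin p => M *ᵥ g i) (fun i : Fin n => h i)) := by
  have hGx : G *ᵥ x ∈ zonotope 0 h := by
    rw [funext hh]
    exact mem_zonotope_single_of_abs_le
      (abs_mulVec_le_mulVec hG (abs_le_of_mem_zonotope hx))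
  rw [add_mulVec, ← add_zero (M *ᵥ c)]
  exact add_mem_zonotope (mulVec_mem_zonotope M hx) hGx

/-- Interval matrix times a zonotope: for every matrix `G` with
`|G_{ij}| ≤ S_{ij}` and every `x` in the zonotope `Z(c; g)`, the vector `(M + G) x`
belongs to the zonotope `Z(M c; M g⁽¹⁾,…,M g⁽ᵖ⁾, h⁽¹⁾,…,h⁽ⁿ⁾)`, where
`h⁽ⁱ⁾` is supported on coordinate `i` with value `(S (|c| + Σₖ |g⁽ᵏ⁾|))ᵢ`. -/
theorem stmt18 {n p : ℕ} (M S : Matrix (Fin n) (Fin n) ℝ) (hS : ∀ i j, 0 ≤ S i j)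
    (c : Fin n → ℝ) (g : Fin p → Fin n → ℝ)
    (h : Fin n → Fin n → ℝ)
    (hh : ∀ i : Fin n, h i = Pi.single i
      ((S *ᵥ (fun j => |c j| + ∑ k, |g k j|)) i))
    (G : Matrix (Fin n) (Fin n) ℝ) (hG : ∀ i j, |G i j| ≤ S i j)
    (x : Fin n → ℝ) (hx : x ∈ zonotope c g) :
    (M + G) *ᵥ x ∈
      zonotope (M *ᵥ c) (Sum.elim (fun i : Fin p => M *ᵥ g i) (fun i : Fin n => h i)) :=
  stmt18_general M S c g h hh G hG x hx
end

section
/- Let A ∈ ℝ^{n×n}, let U ⊆ ℝ^n be a nonempty bounded set, and let T₁, T₂ ≥ 0. For T ≥ 0 define the input reachable set R_p(T) = { ∫_0^T exp(A(T − t)) u(t) dt : u : [0, T] → ℝ^n measurable with u(t) ∈ U for all t }. Then R_p(T₁ + T₂) = { exp(A T₂) x + y : x ∈ R_p(T₁), y ∈ R_p(T₂) }, i.e., R_p(T₁ + T₂) equals the Minkowski sum of exp(A T₂) · R_p(T₁) and R_p(T₂). -/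
open Matrix Set

/-- The input reachable set
`R_p(T) = { ∫_0^T exp(A(T−t)) u(t) dt : u measurable, u(t) ∈ U on [0, T] }`. -/
noncomputable def Rp {n : ℕ} (A : Matrix (Fin n) (Fin n) ℝ) (U : Set (Fin n → ℝ))
    (T : ℝ) : Set (Fin n → ℝ) :=
  {x | ∃ u : ℝ → Fin n → ℝ, Measurable u ∧ (∀ t ∈ Set.Icc 0 T, u t ∈ U) ∧
      x = ∫ t in (0 : ℝ)..T, mexp ((T - t) • A) *ᵥ u t}

/-!
Since `exp(A(T₁ + T₂ - t)) = exp(A T₂) exp(A(T₁ - t))`, splitting `∫_0^{T₁+T₂}` at `T₁` writes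
the state reached under an input `u` as `exp(A T₂)` applied to the state reached at `T₁` under
`u`, plus the state reached at `T₂` under the shifted input `u(· + T₁)`. Conversely, two
admissible inputs are concatenated into one. Boundedness of `U` makes every admissible input
integrable, without which the integral would not split.
-/

open MeasureTheory intervalIntegral

section IntervalIntegral

variable {a b : ℝ}

theorem IntervalIntegrable.of_mapsTo_isBounded {E : Type*} [NormedAddCommGroup E] {u : ℝ → E}
    {U : Set E} (hu : AEStronglyMeasurable u volume) (hU : Bornology.IsBounded U)
    (hmaps : MapsTo u (uIcc a b) U) : IntervalIntegrable u volume a b := by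
  obtain ⟨C, hC⟩ := hU.exists_norm_le
  rw [intervalIntegrable_iff]
  exact Measure.integrableOn_of_bounded measure_Ioc_lt_top.ne hu
    (ae_restrict_of_forall_mem measurableSet_uIoc fun t ht => hC _ (hmaps (uIoc_subset_uIcc ht)))

variable {m k : Type*} [Fintype m] [Fintype k]

theorem IntervalIntegrable.continuousOn_mulVec {M : ℝ → Matrix m k ℝ} {u : ℝ → k → ℝ}
    (hu : IntervalIntegrable u volume a b) (hM : ContinuousOn M (uIcc a b)) :
    IntervalIntegrable (fun t => M t *ᵥ u t) volume a b := by
  rw [intervalIntegrable_iff, IntegrableOn, integrable_pi_iff] at *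
  exact fun i => integrable_finsetSum _ fun j _ =>
    IntegrableOn.continuousOn_mul_of_subset ((continuous_apply_apply i j).comp_continuousOn hM)
      (hu j) isCompact_uIcc measurableSet_uIoc uIoc_subset_uIcc

theorem Matrix.mulVec_intervalIntegral (M : Matrix m k ℝ) {f : ℝ → k → ℝ}
    (hf : IntervalIntegrable f volume a b) :
    M *ᵥ ∫ t in a..b, f t = ∫ t in a..b, M *ᵥ f t := by
  simpa using ((M.mulVecLin).toContinuousLinearMap.intervalIntegral_comp_comm hf).symm

end IntervalIntegral

variable {n : ℕ} (A : Matrix (Fin n) (Fin n) ℝ)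

theorem continuous_mexp_smul_s19 : Continuous fun t : ℝ => mexp (t • A) := by
  let := Matrix.linftyOpNormedRing (n := Fin n) (α := ℝ)
  let := Matrix.linftyOpNormedAlgebra (n := Fin n) (R := ℝ) (α := ℝ)
  let : NormedAlgebra ℚ (Matrix (Fin n) (Fin n) ℝ) := NormedAlgebra.restrictScalars ℚ ℝ _
  exact NormedSpace.exp_continuous.comp (continuous_id.smul continuous_const)

theorem mexp_add_smul (s t : ℝ) : mexp ((s + t) • A) = mexp (s • A) * mexp (t • A) := by
  rw [mexp, mexp, mexp, add_smul]
  exact Matrix.exp_add_of_commute _ _ (((Commute.refl A).smul_left s).smul_right t)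

noncomputable def inputResponse (T : ℝ) (u : ℝ → Fin n → ℝ) : Fin n → ℝ :=
  ∫ t in (0 : ℝ)..T, mexp ((T - t) • A) *ᵥ u t

variable {A}

theorem IntervalIntegrable.mexp_mulVec {u : ℝ → Fin n → ℝ} {a b : ℝ}
    (hu : IntervalIntegrable u volume a b) (c : ℝ) :
    IntervalIntegrable (fun t => mexp ((c - t) • A) *ᵥ u t) volume a b :=
  hu.continuousOn_mulVec ((continuous_mexp_smul_s19 A).comp (by fun_prop)).continuousOn

theorem inputResponse_congr {T : ℝ} {u v : ℝ → Fin n → ℝ} (h : EqOn u v (uIoc 0 T)) :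
    inputResponse A T u = inputResponse A T v :=
  integral_congr_ae (ae_of_all _ fun t ht => by rw [h ht])

theorem inputResponse_add {T₁ T₂ : ℝ} (hT₁ : 0 ≤ T₁) (hT₂ : 0 ≤ T₂) {u : ℝ → Fin n → ℝ}
    (hu : IntervalIntegrable u volume 0 (T₁ + T₂)) :
    inputResponse A (T₁ + T₂) u =
      mexp (T₂ • A) *ᵥ inputResponse A T₁ u + inputResponse A T₂ (fun t => u (t + T₁)) := by
  have hT : T₁ ∈ uIcc 0 (T₁ + T₂) := mem_uIcc_of_le hT₁ (by linarith)
  have hu₁ : IntervalIntegrable u volume 0 T₁ := hu.mono_set (uIcc_subset_uIcc left_mem_uIcc hT)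
  have hu₂ : IntervalIntegrable u volume T₁ (T₁ + T₂) :=
    hu.mono_set (uIcc_subset_uIcc hT right_mem_uIcc)
  rw [inputResponse, ← integral_add_adjacent_intervals (hu₁.mexp_mulVec _) (hu₂.mexp_mulVec _)]
  congr 1
  · rw [inputResponse, mulVec_intervalIntegral _ (hu₁.mexp_mulVec _)]
    refine integral_congr fun t _ => ?_
    rw [mulVec_mulVec, ← mexp_add_smul, add_sub_assoc', add_comm T₂]
  · have hshift := integral_comp_add_right (a := 0) (b := T₂)
      (fun t => mexp ((T₁ + T₂ - t) • A) *ᵥ u t) T₁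
    rw [zero_add, add_comm T₂] at hshift
    rw [← hshift, inputResponse]
    refine integral_congr fun t _ => ?_
    rw [add_comm t, add_sub_add_left_eq_sub]

variable {U : Set (Fin n → ℝ)} {T₁ T₂ : ℝ}

theorem Rp_add_subset (hU : Bornology.IsBounded U) (hT₁ : 0 ≤ T₁) (hT₂ : 0 ≤ T₂) :
    Rp A U (T₁ + T₂) ⊆ {z | ∃ x ∈ Rp A U T₁, ∃ y ∈ Rp A U T₂, z = mexp (T₂ • A) *ᵥ x + y} := by
  rintro _ ⟨u, hu, hmem, rfl⟩
  have hint : IntervalIntegrable u volume 0 (T₁ + T₂) :=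
    .of_mapsTo_isBounded hu.aestronglyMeasurable hU (by rwa [uIcc_of_le (by linarith)])
  exact ⟨_, ⟨u, hu, fun t ht => hmem t ⟨ht.1, by linarith [ht.2]⟩, rfl⟩,
    _, ⟨fun t => u (t + T₁), hu.comp (measurable_add_const T₁),
      fun t ht => hmem _ ⟨by linarith [ht.1], by linarith [ht.2]⟩, rfl⟩,
    inputResponse_add hT₁ hT₂ hint⟩

theorem add_subset_Rp (hU : Bornology.IsBounded U) (hT₁ : 0 ≤ T₁) (hT₂ : 0 ≤ T₂) :
    {z | ∃ x ∈ Rp A U T₁, ∃ y ∈ Rp A U T₂, z = mexp (T₂ • A) *ᵥ x + y} ⊆ Rp A U (T₁ + T₂) := by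
  rintro _ ⟨_, ⟨u₁, hu₁, hmem₁, rfl⟩, _, ⟨u₂, hu₂, hmem₂, rfl⟩, rfl⟩
  set u := (Iic T₁).piecewise u₁ (fun t => u₂ (t - T₁))
  have hu : Measurable u := hu₁.piecewise measurableSet_Iic (hu₂.comp (measurable_sub_const T₁))
  have hmem : ∀ t ∈ Icc 0 (T₁ + T₂), u t ∈ U := by
    intro t ht
    by_cases h : t ≤ T₁
    · simpa [u, h] using hmem₁ t ⟨ht.1, h⟩
    · simpa [u, h] using hmem₂ (t - T₁) ⟨by linarith, by linarith [ht.2]⟩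
  have hint : IntervalIntegrable u volume 0 (T₁ + T₂) :=
    .of_mapsTo_isBounded hu.aestronglyMeasurable hU (by rwa [uIcc_of_le (by linarith)])
  have hhead : EqOn u u₁ (uIoc 0 T₁) := fun t ht => by
    rw [uIoc_of_le hT₁] at ht
    simp [u, ht.2]
  have htail : EqOn (fun t => u (t + T₁)) u₂ (uIoc 0 T₂) := fun t ht => by
    rw [uIoc_of_le hT₂] at ht
    simp [u, ht.1]
  refine ⟨u, hu, hmem, ?_⟩
  show mexp (T₂ • A) *ᵥ inputResponse A T₁ u₁ + inputResponse A T₂ u₂ = inputResponse A (T₁ + T₂) u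
  rw [← inputResponse_congr hhead, ← inputResponse_congr htail, inputResponse_add hT₁ hT₂ hint]

theorem stmt19_general {n : ℕ} (A : Matrix (Fin n) (Fin n) ℝ) (U : Set (Fin n → ℝ))
    (hUbd : Bornology.IsBounded U)
    (T₁ T₂ : ℝ) (hT₁ : 0 ≤ T₁) (hT₂ : 0 ≤ T₂) :
    Rp A U (T₁ + T₂) =
      {z | ∃ x ∈ Rp A U T₁, ∃ y ∈ Rp A U T₂, z = mexp (T₂ • A) *ᵥ x + y} :=
  (Rp_add_subset hUbd hT₁ hT₂).antisymm (add_subset_Rp hUbd hT₁ hT₂)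

/-- Semigroup property of the input reachable set:
`R_p(T₁ + T₂) = exp(A T₂) · R_p(T₁) + R_p(T₂)` (Minkowski sum). -/
theorem stmt19 {n : ℕ} (A : Matrix (Fin n) (Fin n) ℝ) (U : Set (Fin n → ℝ))
    (hUne : U.Nonempty) (hUbd : Bornology.IsBounded U)
    (T₁ T₂ : ℝ) (hT₁ : 0 ≤ T₁) (hT₂ : 0 ≤ T₂) :
    Rp A U (T₁ + T₂) =
      {z | ∃ x ∈ Rp A U T₁, ∃ y ∈ Rp A U T₂, z = mexp (T₂ • A) *ᵥ x + y} :=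
  stmt19_general A U hUbd T₁ T₂ hT₁ hT₂
end
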